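/- Let x ∈ T^G be a valid G-Wang tiling, F ⊆ G a finite subset, g a generator and c a color. Then |#{h ∈ F : x_h(g) = c} − #{h ∈ F : x_h(g⁻¹) = c}| ≤ #(F g △ F) + #(F g⁻¹ △ F). -/

import Mathlib

/-!
Validity of the tiling says that the `gᵢ`-side of the tile at `h` matches the `gᵢ⁻¹`-side of
the tile at `h gᵢ`. So the `h ∈ F` showing `c` on side `gᵢ` are in bijection with the elements of
`F gᵢ` showing `c` on side `gᵢ⁻¹`; those of `F gᵢ` lying outside `F` number at most
`#(F gᵢ △ F)`. This bounds one sign of the difference, and the side `gᵢ⁻¹` the other.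
-/

/-- The group element corresponding to a direction. -/
def dirElem {G : Type*} [Group G] {d : ℕ} (gen : Fin d → G) : Fin d × Bool → G
  | (i, true) => gen i
  | (i, false) => (gen i)⁻¹

/-- The opposite direction. -/
def invDir {d : ℕ} : Fin d × Bool → Fin d × Bool
  | (i, b) => (i, !b)

open Finset

theorem Finset.card_filter_le_card_filter_add_card_symmDiff {α : Type*} [DecidableEq α]
    (p : α → Prop) [DecidablePred p] (s t : Finset α) :
    #(s.filter p) ≤ #(t.filter p) + #(symmDiff s t) :=
  calc #(s.filter p)
      ≤ #(s.filter p \ t.filter p) + #(t.filter p) := card_le_card_sdiff_add_card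
    _ ≤ #(symmDiff s t) + #(t.filter p) := by
        gcongr
        intro a
        simp only [mem_sdiff, mem_filter, mem_symmDiff]
        tauto
    _ = #(t.filter p) + #(symmDiff s t) := add_comm _ _

theorem Finset.card_filter_image_mul_right {G : Type*} [Group G] [DecidableEq G]
    (p : G → Prop) [DecidablePred p] (F : Finset G) (g : G) :
    #((F.image (· * g)).filter p) = #(F.filter fun h => p (h * g)) := by
  rw [filter_image, card_image_of_injective _ (mul_left_injective g)]

def IsValidWangTiling {G : Type*} [Group G] {d : ℕ} (gen : Fin d → G) {T C : Type*}
    (tile : T → Fin d × Bool → C) (x : G → T) : Prop :=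
  ∀ (g : G) (s : Fin d × Bool), tile (x g) s = tile (x (g * dirElem gen s)) (invDir s)

namespace IsValidWangTiling

variable {G : Type*} [Group G] [DecidableEq G] {d : ℕ} {gen : Fin d → G} {T C : Type*}
  [DecidableEq C] {tile : T → Fin d × Bool → C} {x : G → T}

theorem card_filter_eq_card_filter_invDir_image (hx : IsValidWangTiling gen tile x)
    (F : Finset G) (s : Fin d × Bool) (c : C) :
    #(F.filter fun h => tile (x h) s = c) =
      #((F.image (· * dirElem gen s)).filter fun h => tile (x h) (invDir s) = c) := by
  simp only [card_filter_image_mul_right, fun h => (hx h s).symm]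

theorem card_filter_le_card_filter_invDir_add (hx : IsValidWangTiling gen tile x)
    (F : Finset G) (s : Fin d × Bool) (c : C) :
    #(F.filter fun h => tile (x h) s = c) ≤
      #(F.filter fun h => tile (x h) (invDir s) = c) +
        #(symmDiff (F.image (· * dirElem gen s)) F) := by
  rw [hx.card_filter_eq_card_filter_invDir_image]
  exact card_filter_le_card_filter_add_card_symmDiff _ _ _

end IsValidWangTiling

/-- For a valid Wang tiling `x` of `G`, a finite subset `F ⊆ G`, a generator `gᵢ` and a
color `c`: the difference between the number of `h ∈ F` whose tile shows `c` on side `gᵢ`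
and the number of `h ∈ F` whose tile shows `c` on side `gᵢ⁻¹` is bounded by
`#(F gᵢ △ F) + #(F gᵢ⁻¹ △ F)`. -/
theorem tiling_count_diff_le_boundary {G : Type*} [Group G] [DecidableEq G]
    {d : ℕ} (gen : Fin d → G) {T C : Type*} [DecidableEq C]
    (tile : T → Fin d × Bool → C) (x : G → T)
    (hx : ∀ (g : G) (s : Fin d × Bool),
      tile (x g) s = tile (x (g * dirElem gen s)) (invDir s))
    (F : Finset G) (i : Fin d) (c : C) :
    |((F.filter (fun h => tile (x h) (i, true) = c)).card : ℤ) -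
        ((F.filter (fun h => tile (x h) (i, false) = c)).card : ℤ)| ≤
      (symmDiff (F.image (· * gen i)) F).card +
        (symmDiff (F.image (· * (gen i)⁻¹)) F).card := by
  have h_true := IsValidWangTiling.card_filter_le_card_filter_invDir_add hx F (i, true) c
  have h_false := IsValidWangTiling.card_filter_le_card_filter_invDir_add hx F (i, false) c
  simp only [dirElem, invDir, Bool.not_true, Bool.not_false] at h_true h_false
  rw [abs_sub_le_iff]
  constructor <;> omega
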